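/- Let M be a p×(k+1) real matrix with p ≥ k+1, written as (N | x) where N consists of the first k columns and x is the last column. Write x = (x', x'')ᵀ with x'' ∈ ℝ^{p−k}, and suppose N = (Σ V; 0) where Σ = diag(σ_1,…,σ_k) with σ_1 ≥ … ≥ σ_k > 0 and V ∈ O(k) (i.e. the last p−k rows of N vanish). If D_k(M) ≤ C·D_k(N) and D_{k+1}(M) ≤ R, then |x''|_∞ ≤ C'(p,k,C)·min(σ_k, R/(σ_1⋯σ_k)) for a constant C' depending only on p, k, C. -/

import Mathlib

open Matrix
open scoped BigOperators

noncomputable def maxSubdet {p q : ℕ} (k : ℕ) (M : Matrix (Fin p) (Fin q) ℝ) : ℝ :=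
  ⨆ (f : Fin k → Fin p) (g : Fin k → Fin q) (_ : Function.Injective f)
    (_ : Function.Injective g), |(M.submatrix f g).det|

/-- Append the column `x` on the right of the matrix `N`. -/
def appendCol {p k : ℕ} (N : Matrix (Fin p) (Fin k) ℝ) (x : Fin p → ℝ) :
    Matrix (Fin p) (Fin (k + 1)) ℝ :=
  Matrix.of fun i => Fin.snoc (N i) (x i)

/-- The `p × k` matrix `(Σ V; 0)`: its `i`-th row is `σᵢ Vⁱ` for `i < k` and zero for `i ≥ k`. -/
def sigmaVMat (p k : ℕ) (σ : Fin k → ℝ) (V : Matrix (Fin k) (Fin k) ℝ) :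
    Matrix (Fin p) (Fin k) ℝ :=
  Matrix.of fun i j => if h : (i : ℕ) < k then σ ⟨(i : ℕ), h⟩ * V ⟨(i : ℕ), h⟩ j else 0

lemma le_maxSubdet {p q k : ℕ} (M : Matrix (Fin p) (Fin q) ℝ)
    {f : Fin k → Fin p} {g : Fin k → Fin q} (hf : Function.Injective f)
    (hg : Function.Injective g) : |(M.submatrix f g).det| ≤ maxSubdet k M := by
  have h1 : |(M.submatrix f g).det| ≤ ⨆ (_ : Function.Injective g), |(M.submatrix f g).det| :=
    le_ciSup (f := fun _ : Function.Injective g => |(M.submatrix f g).det|)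
      (Set.Finite.bddAbove (Set.finite_range _)) hg
  have h2 : (⨆ (_ : Function.Injective g), |(M.submatrix f g).det|) ≤
      ⨆ (_ : Function.Injective f) (_ : Function.Injective g), |(M.submatrix f g).det| :=
    le_ciSup (f := fun _ : Function.Injective f =>
      ⨆ (_ : Function.Injective g), |(M.submatrix f g).det|)
      (Set.Finite.bddAbove (Set.finite_range _)) hf
  have h3 : (⨆ (_ : Function.Injective f) (_ : Function.Injective g), |(M.submatrix f g).det|) ≤
      ⨆ (g : Fin k → Fin q) (_ : Function.Injective f) (_ : Function.Injective g),
        |(M.submatrix f g).det| :=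
    le_ciSup (f := fun g : Fin k → Fin q =>
      ⨆ (_ : Function.Injective f) (_ : Function.Injective g), |(M.submatrix f g).det|)
      (Set.Finite.bddAbove (Set.finite_range _)) g
  have h4 : (⨆ (g : Fin k → Fin q) (_ : Function.Injective f) (_ : Function.Injective g),
      |(M.submatrix f g).det|) ≤ maxSubdet k M :=
    le_ciSup (f := fun f : Fin k → Fin p =>
      ⨆ (g : Fin k → Fin q) (_ : Function.Injective f) (_ : Function.Injective g),
        |(M.submatrix f g).det|)
      (Set.Finite.bddAbove (Set.finite_range _)) f
  exact h1.trans (h2.trans (h3.trans h4))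

lemma maxSubdet_le {p q k : ℕ} (M : Matrix (Fin p) (Fin q) ℝ) {c : ℝ} (hc : 0 ≤ c)
    (h : ∀ (f : Fin k → Fin p) (g : Fin k → Fin q), Function.Injective f →
      Function.Injective g → |(M.submatrix f g).det| ≤ c) :
    maxSubdet k M ≤ c := by
  apply Real.iSup_le _ hc
  intro f
  apply Real.iSup_le _ hc
  intro g
  apply Real.iSup_le _ hc
  intro hf
  apply Real.iSup_le _ hc
  intro hg
  exact h f g hf hg

lemma snoc_injective {n m : ℕ} {e : Fin n → Fin m} (he : Function.Injective e)
    {j : Fin m} (hj : ∀ i, e i ≠ j) : Function.Injective (Fin.snoc e j : Fin (n+1) → Fin m) := by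
  intro a b hab
  induction a using Fin.lastCases with
  | last =>
    induction b using Fin.lastCases with
    | last => rfl
    | cast b =>
      rw [Fin.snoc_last, Fin.snoc_castSucc] at hab
      exact absurd hab.symm (hj b)
  | cast a =>
    induction b using Fin.lastCases with
    | last =>
      rw [Fin.snoc_last, Fin.snoc_castSucc] at hab
      exact absurd hab (hj a)
    | cast b =>
      rw [Fin.snoc_castSucc, Fin.snoc_castSucc] at hab
      exact congrArg Fin.castSucc (he hab)

lemma det_appendCol_snoc {p k n : ℕ} (N : Matrix (Fin p) (Fin k) ℝ) (x : Fin p → ℝ)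
    (f₀ : Fin n → Fin p) (j : Fin p) (hj : ∀ c, N j c = 0) (g₁ : Fin n → Fin k) :
    ((appendCol N x).submatrix (Fin.snoc f₀ j)
      (Fin.snoc (fun i => (g₁ i).castSucc) (Fin.last k))).det
      = x j * (N.submatrix f₀ g₁).det := by
  set A := (appendCol N x).submatrix (Fin.snoc f₀ j)
      (Fin.snoc (fun i => (g₁ i).castSucc) (Fin.last k)) with hA
  rw [Matrix.det_succ_row A (Fin.last n)]
  rw [Finset.sum_eq_single (Fin.last n)]
  · have e1 : A (Fin.last n) (Fin.last n) = x j := by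
      simp [hA, appendCol, Matrix.submatrix_apply, Fin.snoc_last]
    have e2 : A.submatrix (Fin.last n).succAbove (Fin.last n).succAbove = N.submatrix f₀ g₁ := by
      ext i c
      simp [hA, appendCol, Matrix.submatrix_apply, Fin.succAbove_last, Fin.snoc_castSucc]
    rw [e1, e2]
    have : ((-1 : ℝ) ^ ((Fin.last n : ℕ) + (Fin.last n : ℕ))) = 1 := by
      rw [Fin.val_last, ← two_mul, pow_mul]
      norm_num
    rw [this, one_mul]
  · intro b _ hb
    obtain ⟨c, rfl⟩ := Fin.exists_castSucc_eq.mpr hb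
    have : A (Fin.last n) c.castSucc = 0 := by
      simp [hA, appendCol, Matrix.submatrix_apply, Fin.snoc_last, Fin.snoc_castSucc]
      exact hj (g₁ c)
    rw [this, mul_zero, zero_mul]
  · intro h
    exact absurd (Finset.mem_univ _) h

lemma abs_det_submatrix_equiv {n : ℕ} (A : Matrix (Fin n) (Fin n) ℝ)
    (e₁ e₂ : Equiv.Perm (Fin n)) :
    |(A.submatrix e₁ e₂).det| = |A.det| := by
  have key : (A.submatrix (e₂.symm.trans e₁ : Equiv.Perm (Fin n)) id).submatrix e₂ e₂
      = A.submatrix e₁ e₂ := by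
    ext i c
    simp [Matrix.submatrix_apply]
  rw [← key, Matrix.det_submatrix_equiv_self, Matrix.det_permute]
  rw [abs_mul]
  rcases Int.units_eq_one_or (Equiv.Perm.sign (e₂.symm.trans e₁)) with h | h <;>
    rw [h] <;> norm_num

/-- Step 1 of Lemma `lem:vol`. If `N = (ΣV; 0)` with `Σ = diag(σ₁ ≥ … ≥ σ_k > 0)`
and `V` orthogonal, `M = (N | x)`, `D_k(M) ≤ C D_k(N)` and `D_{k+1}(M) ≤ R`, then the last
`p − k` coordinates of `x` satisfy `|x''ⱼ| ≤ C'(p,k,C)·min(σ_k, R/(σ₁⋯σ_k))`. -/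
theorem stmt17 (p k : ℕ) (hp : k + 1 ≤ p) (hk : 0 < k) (C : ℝ) (hC : 0 < C) :
    ∃ C' : ℝ, 0 < C' ∧
      ∀ (R : ℝ) (σ : Fin k → ℝ) (V : Matrix (Fin k) (Fin k) ℝ) (x : Fin p → ℝ),
        0 < R → (∀ i, 0 < σ i) → (∀ i j : Fin k, i ≤ j → σ j ≤ σ i) → Vᵀ * V = 1 →
        maxSubdet k (appendCol (sigmaVMat p k σ V) x) ≤ C * maxSubdet k (sigmaVMat p k σ V) →
        maxSubdet (k + 1) (appendCol (sigmaVMat p k σ V) x) ≤ R →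
        ∀ j : Fin p, k ≤ (j : ℕ) →
          |x j| ≤ C' * min (σ ⟨k - 1, by omega⟩) (R / ∏ i, σ i) := by
  obtain ⟨k', rfl⟩ : ∃ k', k = k' + 1 := ⟨k - 1, (Nat.succ_pred_eq_of_pos hk).symm⟩
  refine ⟨(C + 1) * ((k' : ℝ) + 2), by positivity, ?_⟩
  intro R σ V x hR hσ _hmono hV hDk hDk1 j hj
  have hkp : k' + 1 ≤ p := by omega
  have hk'p : k' ≤ p := by omega
  set N := sigmaVMat p (k' + 1) σ V with hN
  set M := appendCol N x with hM
  have hprod : (0 : ℝ) < ∏ i, σ i := Finset.prod_pos fun i _ => hσ i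
  have hP : (0 : ℝ) < ∏ i : Fin k', σ i.castSucc := Finset.prod_pos fun i _ => hσ _
  -- entries of N
  have hentry : ∀ (i : Fin p) (hi : (i : ℕ) < k' + 1) (c : Fin (k' + 1)),
      N i c = σ ⟨(i : ℕ), hi⟩ * V ⟨(i : ℕ), hi⟩ c := fun i hi c => dif_pos hi
  have hzero : ∀ (i : Fin p), k' + 1 ≤ (i : ℕ) → ∀ c, N i c = 0 :=
    fun i hi c => dif_neg (by omega)
  have hj0 : ∀ c, N j c = 0 := hzero j hj
  -- orthogonality facts
  have hdet2 : V.det * V.det = 1 := by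
    have h := congrArg Matrix.det hV
    rwa [Matrix.det_mul, Matrix.det_transpose, Matrix.det_one] at h
  have habsdet : |V.det| = 1 := by
    rcases mul_self_eq_one_iff.mp hdet2 with h | h <;> rw [h] <;> norm_num
  have hVVt : V * Vᵀ = 1 := mul_eq_one_comm.mp hV
  have hadj : V.adjugate = V.det • Vᵀ := by
    have h1 : Vᵀ * (V * V.adjugate) = V.adjugate := by
      rw [← Matrix.mul_assoc, hV, Matrix.one_mul]
    rw [Matrix.mul_adjugate] at h1
    rw [← h1, Matrix.mul_smul, Matrix.mul_one]
  have hsum : ∑ c, V (Fin.last k') c * V (Fin.last k') c = 1 := by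
    have h : (V * Vᵀ) (Fin.last k') (Fin.last k')
        = (1 : Matrix (Fin (k' + 1)) (Fin (k' + 1)) ℝ) (Fin.last k') (Fin.last k') := by
      rw [hVVt]
    simpa [Matrix.mul_apply, Matrix.one_apply] using h
  -- a large entry in the last row of V
  obtain ⟨c, hc⟩ : ∃ c, 1 / ((k' : ℝ) + 1) ≤ V (Fin.last k') c * V (Fin.last k') c := by
    by_contra hcon
    push_neg at hcon
    have hlt := Finset.sum_lt_sum_of_nonempty (Finset.univ_nonempty (α := Fin (k' + 1)))
      (fun c _ => hcon c)
    rw [hsum, Finset.sum_const, Finset.card_univ, Fintype.card_fin, nsmul_eq_mul] at hlt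
    have hne : ((k' : ℝ) + 1) ≠ 0 := by positivity
    rw [show ((k' + 1 : ℕ) : ℝ) = (k' : ℝ) + 1 by push_cast; ring] at hlt
    rw [mul_one_div, div_self hne] at hlt
    exact lt_irrefl _ hlt
  have hcle1 : |V (Fin.last k') c| ≤ 1 := by
    have h1 : V (Fin.last k') c * V (Fin.last k') c ≤ 1 := by
      rw [← hsum]
      exact Finset.single_le_sum (f := fun i => V (Fin.last k') i * V (Fin.last k') i)
        (fun i _ => mul_self_nonneg _) (Finset.mem_univ c)
    nlinarith [abs_nonneg (V (Fin.last k') c), abs_mul_abs_self (V (Fin.last k') c)]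
  have hcabs : 1 / ((k' : ℝ) + 1) ≤ |V (Fin.last k') c| := by
    calc 1 / ((k' : ℝ) + 1) ≤ V (Fin.last k') c * V (Fin.last k') c := hc
      _ = |V (Fin.last k') c| * |V (Fin.last k') c| := (abs_mul_abs_self _).symm
      _ ≤ 1 * |V (Fin.last k') c| := mul_le_mul_of_nonneg_right hcle1 (abs_nonneg _)
      _ = |V (Fin.last k') c| := one_mul _
  -- the top block of N
  have htop : N.submatrix (fun i : Fin (k' + 1) => Fin.castLE hkp i) id
      = Matrix.diagonal σ * V := by
    ext i m
    rw [Matrix.submatrix_apply, hentry (Fin.castLE hkp i) (by simp only [Fin.coe_castLE]; exact i.isLt), id_eq, Matrix.diagonal_mul]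
    rfl
  have hdd : |(Matrix.diagonal σ * V).det| = ∏ i, σ i := by
    rw [Matrix.det_mul, Matrix.det_diagonal, abs_mul, habsdet, mul_one, abs_of_pos hprod]
  -- the truncated block of N
  have hblock2 : N.submatrix (fun i : Fin k' => Fin.castLE hk'p i) c.succAbove
      = Matrix.diagonal (fun i : Fin k' => σ i.castSucc) * (V.submatrix Fin.castSucc c.succAbove)
      := by
    ext i m
    rw [Matrix.submatrix_apply, hentry _ (by simp), Matrix.diagonal_mul]
    rfl
  -- bound on maxSubdet of N
  have hDN : maxSubdet (k' + 1) N ≤ ∏ i, σ i := by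
    apply maxSubdet_le _ hprod.le
    intro f g hf hg
    by_cases hall : ∀ i, ((f i : Fin p) : ℕ) < k' + 1
    · set f' : Fin (k' + 1) → Fin (k' + 1) := fun i => ⟨(f i : ℕ), hall i⟩ with hf'
      have hf'inj : Function.Injective f' := by
        intro a b hab
        have hv := congrArg Fin.val hab
        exact hf (Fin.ext hv)
      have heq : N.submatrix f g = (Matrix.diagonal σ * V).submatrix f' g := by
        ext i m
        rw [Matrix.submatrix_apply, Matrix.submatrix_apply, hentry _ (hall i),
          Matrix.diagonal_mul]
      rw [heq]
      exact le_of_eq ((abs_det_submatrix_equiv (Matrix.diagonal σ * V)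
        (Equiv.ofBijective f' (Finite.injective_iff_bijective.mp hf'inj))
        (Equiv.ofBijective g (Finite.injective_iff_bijective.mp hg))).trans hdd)
    · push_neg at hall
      obtain ⟨i, hi⟩ := hall
      have hdz : (N.submatrix f g).det = 0 := by
        apply Matrix.det_eq_zero_of_row_eq_zero i
        intro m
        rw [Matrix.submatrix_apply]
        exact hzero _ hi _
      rw [hdz, abs_zero]
      exact hprod.le
  -- Bound 1 : |x j| * ∏ σ ≤ R
  have hf₀inj : Function.Injective (fun i : Fin (k' + 1) => Fin.castLE hkp i) :=
    Fin.castLE_injective hkp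
  have hFinj : Function.Injective
      (Fin.snoc (fun i : Fin (k' + 1) => Fin.castLE hkp i) j : Fin (k' + 2) → Fin p) := by
    apply snoc_injective hf₀inj
    intro i h
    have h1 := congrArg Fin.val h
    simp only [Fin.coe_castLE] at h1
    have := i.isLt
    omega
  have hGinj : Function.Injective
      (Fin.snoc (fun i : Fin (k' + 1) => ((id i : Fin (k' + 1)).castSucc))
        (Fin.last (k' + 1)) : Fin (k' + 2) → Fin (k' + 2)) := by
    apply snoc_injective
    · exact fun a b hab => Fin.castSucc_injective _ hab
    · exact fun i => (Fin.castSucc_lt_last _).ne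
  have h1R : |x j| * (∏ i, σ i) ≤ R := by
    have hdet := det_appendCol_snoc N x (fun i : Fin (k' + 1) => Fin.castLE hkp i) j hj0 id
    have hle := le_maxSubdet M hFinj hGinj
    rw [hdet, htop] at hle
    calc |x j| * ∏ i, σ i = |x j * (Matrix.diagonal σ * V).det| := by
          rw [abs_mul, hdd]
      _ ≤ maxSubdet (k' + 1 + 1) M := hle
      _ ≤ R := hDk1
  -- Bound 2 : |x j| ≤ (k'+1) C σ_last
  have hVsub : |(V.submatrix Fin.castSucc c.succAbove).det| = |V (Fin.last k') c| := by
    have hadjf := Matrix.adjugate_fin_succ_eq_det_submatrix V c (Fin.last k')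
    rw [Fin.succAbove_last] at hadjf
    have h2 : V.adjugate c (Fin.last k') = V.det * V (Fin.last k') c := by
      rw [hadj]
      simp [Matrix.smul_apply, Matrix.transpose_apply, smul_eq_mul]
    calc |(V.submatrix Fin.castSucc c.succAbove).det|
        = |V.adjugate c (Fin.last k')| := by
          rw [hadjf, abs_mul, abs_pow, abs_neg, abs_one, one_pow, one_mul]
      _ = |V.det * V (Fin.last k') c| := by rw [h2]
      _ = |V (Fin.last k') c| := by rw [abs_mul, habsdet, one_mul]
  have hF'inj : Function.Injective
      (Fin.snoc (fun i : Fin k' => Fin.castLE hk'p i) j : Fin (k' + 1) → Fin p) := by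
    apply snoc_injective (Fin.castLE_injective hk'p)
    intro i h
    have h1 := congrArg Fin.val h
    simp only [Fin.coe_castLE] at h1
    have := i.isLt
    omega
  have hG'inj : Function.Injective
      (Fin.snoc (fun i : Fin k' => ((c.succAbove i).castSucc))
        (Fin.last (k' + 1)) : Fin (k' + 1) → Fin (k' + 2)) := by
    apply snoc_injective
    · exact fun a b hab =>
        Fin.succAbove_right_injective (Fin.castSucc_injective _ hab)
    · exact fun i => (Fin.castSucc_lt_last _).ne
  have h2C : |x j| * ((∏ i : Fin k', σ i.castSucc) * |V (Fin.last k') c|)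
      ≤ C * ∏ i, σ i := by
    have hdet := det_appendCol_snoc N x (fun i : Fin k' => Fin.castLE hk'p i) j hj0 c.succAbove
    have hle := le_maxSubdet M hF'inj hG'inj
    rw [hdet, hblock2] at hle
    have hdetblock : |(Matrix.diagonal (fun i : Fin k' => σ i.castSucc)
        * (V.submatrix Fin.castSucc c.succAbove)).det|
        = (∏ i : Fin k', σ i.castSucc) * |V (Fin.last k') c| := by
      rw [Matrix.det_mul, Matrix.det_diagonal, abs_mul, hVsub, abs_of_pos hP]
    calc |x j| * ((∏ i : Fin k', σ i.castSucc) * |V (Fin.last k') c|)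
        = |x j * (Matrix.diagonal (fun i : Fin k' => σ i.castSucc)
            * (V.submatrix Fin.castSucc c.succAbove)).det| := by
          rw [abs_mul, hdetblock]
      _ ≤ maxSubdet (k' + 1) M := hle
      _ ≤ C * maxSubdet (k' + 1) N := hDk
      _ ≤ C * ∏ i, σ i := by
          exact mul_le_mul_of_nonneg_left hDN hC.le
  -- extract |x j| ≤ (k'+1) C σ_last
  have hprodsplit : (∏ i, σ i) = (∏ i : Fin k', σ i.castSucc) * σ (Fin.last k') :=
    Fin.prod_univ_castSucc σ
  have hav : |x j| * |V (Fin.last k') c| ≤ C * σ (Fin.last k') := by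
    have h2' : (∏ i : Fin k', σ i.castSucc) * (|x j| * |V (Fin.last k') c|)
        ≤ (∏ i : Fin k', σ i.castSucc) * (C * σ (Fin.last k')) := by
      calc (∏ i : Fin k', σ i.castSucc) * (|x j| * |V (Fin.last k') c|)
          = |x j| * ((∏ i : Fin k', σ i.castSucc) * |V (Fin.last k') c|) := by ring
        _ ≤ C * ∏ i, σ i := h2C
        _ = (∏ i : Fin k', σ i.castSucc) * (C * σ (Fin.last k')) := by
            rw [hprodsplit]; ring
    exact le_of_mul_le_mul_left h2' hP
  have hboundA : |x j| ≤ ((C + 1) * ((k' : ℝ) + 2)) * σ (Fin.last k') := by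
    have h3 : |x j| * (1 / ((k' : ℝ) + 1)) ≤ C * σ (Fin.last k') :=
      le_trans (mul_le_mul_of_nonneg_left hcabs (abs_nonneg _)) hav
    have hn : (0 : ℝ) < (k' : ℝ) + 1 := by positivity
    rw [mul_one_div] at h3
    have h3' : |x j| ≤ C * σ (Fin.last k') * ((k' : ℝ) + 1) := (div_le_iff₀ hn).mp h3
    nlinarith [mul_pos (hσ (Fin.last k')) hC, hσ (Fin.last k'),
      mul_nonneg (mul_nonneg hC.le (hσ (Fin.last k')).le) (Nat.cast_nonneg k' : (0:ℝ) ≤ k')]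
  have hboundB : |x j| ≤ R / ∏ i, σ i := (le_div_iff₀ hprod).mpr h1R
  -- conclude
  have hC'1 : (1 : ℝ) ≤ (C + 1) * ((k' : ℝ) + 2) := by
    have h1 : (1 : ℝ) ≤ C + 1 := by linarith
    have h2 : (1 : ℝ) ≤ (k' : ℝ) + 2 := by
      have hnn : (0 : ℝ) ≤ (k' : ℝ) := Nat.cast_nonneg k'
      linarith
    calc (1 : ℝ) = 1 * 1 := (mul_one 1).symm
      _ ≤ (C + 1) * ((k' : ℝ) + 2) := mul_le_mul h1 h2 zero_le_one (by linarith)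
  have hfinal : |x j| ≤ (C + 1) * ((k' : ℝ) + 2) * min (σ (Fin.last k')) (R / ∏ i, σ i) := by
    rcases le_total (σ (Fin.last k')) (R / ∏ i, σ i) with h | h
    · rw [min_eq_left h]
      exact hboundA
    · rw [min_eq_right h]
      calc |x j| ≤ R / ∏ i, σ i := hboundB
        _ = 1 * (R / ∏ i, σ i) := (one_mul _).symm
        _ ≤ ((C + 1) * ((k' : ℝ) + 2)) * (R / ∏ i, σ i) := by
            apply mul_le_mul_of_nonneg_right hC'1
            positivity
  exact hfinal
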